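/- arXiv:1101.4962 — 8 statements merged into one kernel-verified Lean document; each statement's English description precedes it below -/
import Mathlib

section
/- If f : L_1 × ⋯ × L_n → L is pseudo-median decomposable w.r.t. unary maps φ_i : L_i → L (i = 1,…,n) satisfying the boundary conditions, then for every x, f(x_1,…,x_n) = ⋁_{I ⊆ {1,…,n}} ( f(e_I) ∧ ⋀_{i∈I} φ_i(x_i) ); in other words f(x) = p(φ_1(x_1),…,φ_n(x_n)) where p is the polynomial function p(y_1,…,y_n) = ⋁_{I ⊆ {1,…,n}} ( f(e_I) ∧ ⋀_{i∈I} y_i ). -/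
open Function

/-- A lattice polynomial function on a chain `M`: a member of the smallest set of `n`-ary
functions containing all projections and constants and closed under pointwise `⊓` and `⊔`. -/
inductive IsLatticePolynomial {M : Type*} [LinearOrder M] {n : ℕ} :
    ((Fin n → M) → M) → Prop
  | proj (i : Fin n) : IsLatticePolynomial fun x => x i
  | const (c : M) : IsLatticePolynomial fun _ => c
  | inf {p q : (Fin n → M) → M} :
      IsLatticePolynomial p → IsLatticePolynomial q →
      IsLatticePolynomial fun x => p x ⊓ q x
  | sup {p q : (Fin n → M) → M} :
      IsLatticePolynomial p → IsLatticePolynomial q →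
      IsLatticePolynomial fun x => p x ⊔ q x

/-- A Sugeno integral: an idempotent lattice polynomial function. -/
def IsSugenoIntegral {M : Type*} [LinearOrder M] {n : ℕ} (q : (Fin n → M) → M) : Prop :=
  IsLatticePolynomial q ∧ ∀ c : M, q (fun _ => c) = c

/-- `φ` satisfies the boundary conditions: `φ 0 ≤ φ x ≤ φ 1` for all `x`. -/
def BoundaryCond {α : Type*} {M : Type*} [LE α] [OrderTop α] [OrderBot α] [Preorder M]
    (φ : α → M) : Prop :=
  ∀ x : α, φ ⊥ ≤ φ x ∧ φ x ≤ φ ⊤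

/-- The median of three elements of a lattice. -/
def med {α : Type*} [Lattice α] (a b c : α) : α :=
  (a ⊓ b) ⊔ (a ⊓ c) ⊔ (b ⊓ c)

/-- Two `n`-tuples are comonotonic if some permutation sorts both simultaneously. -/
def Comonotone {M : Type*} [Preorder M] {n : ℕ} (y y' : Fin n → M) : Prop :=
  ∃ σ : Equiv.Perm (Fin n), Monotone (y ∘ σ) ∧ Monotone (y' ∘ σ)

section PiDefs

variable {n : ℕ} {M : Type*} {L : Fin n → Type*}
variable [∀ i, LinearOrder (L i)] [∀ i, BoundedOrder (L i)]
variable [LinearOrder M] [BoundedOrder M]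

/-- A pseudo-polynomial function: composition of a lattice polynomial function with unary
maps satisfying the boundary conditions. -/
def IsPseudoPolynomial (f : (∀ i, L i) → M) : Prop :=
  ∃ (p : (Fin n → M) → M) (φ : ∀ i, L i → M),
    IsLatticePolynomial p ∧ (∀ i, BoundaryCond (φ i)) ∧
      ∀ x, f x = p fun i => φ i (x i)

/-- A pseudo-Sugeno integral: composition of a Sugeno integral with unary maps satisfying
the boundary conditions. -/
def IsPseudoSugenoIntegral (f : (∀ i, L i) → M) : Prop :=
  ∃ (q : (Fin n → M) → M) (φ : ∀ i, L i → M),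
    IsSugenoIntegral q ∧ (∀ i, BoundaryCond (φ i)) ∧
      ∀ x, f x = q fun i => φ i (x i)

/-- A Sugeno utility function: composition of a Sugeno integral with local utility
(order-preserving) functions. -/
def IsSugenoUtility (f : (∀ i, L i) → M) : Prop :=
  ∃ (q : (Fin n → M) → M) (φ : ∀ i, L i → M),
    IsSugenoIntegral q ∧ (∀ i, Monotone (φ i)) ∧
      ∀ x, f x = q fun i => φ i (x i)

/-- `f` is pseudo-median decomposable w.r.t. the unary maps `φ`. -/
def PseudoMedianDecomp (f : (∀ i, L i) → M) (φ : ∀ i, L i → M) : Prop :=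
  ∀ (x : ∀ i, L i) (k : Fin n),
    f x = med (f (update x k ⊥)) (φ k (x k)) (f (update x k ⊤))

/-- `d ∈ φ̄⁻¹(c)`: all components of `d` are mapped to `c` by the corresponding `φ i`. -/
def FiberAll (φ : ∀ i, L i → M) (c : M) (d : ∀ i, L i) : Prop :=
  ∀ i, φ i (d i) = c

/-- `f` is pseudo-min homogeneous w.r.t. `φ` with common range `R`. -/
def PseudoMinHomog (f : (∀ i, L i) → M) (φ : ∀ i, L i → M) (R : Set M) : Prop :=
  ∀ (x : ∀ i, L i), ∀ c ∈ R, ∀ d : ∀ i, L i, FiberAll φ c d →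
    f (fun i => x i ⊓ d i) = f x ⊓ c

/-- `f` is pseudo-max homogeneous w.r.t. `φ` with common range `R`. -/
def PseudoMaxHomog (f : (∀ i, L i) → M) (φ : ∀ i, L i → M) (R : Set M) : Prop :=
  ∀ (x : ∀ i, L i), ∀ c ∈ R, ∀ d : ∀ i, L i, FiberAll φ c d →
    f (fun i => x i ⊔ d i) = f x ⊔ c

/-- Condition (PI): `f d = c` whenever `d ∈ φ̄⁻¹(c)`, `c ∈ R`. -/
def PseudoPI (f : (∀ i, L i) → M) (φ : ∀ i, L i → M) (R : Set M) : Prop :=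
  ∀ c ∈ R, ∀ d : ∀ i, L i, FiberAll φ c d → f d = c

/-- `[x]_d`: the tuple whose `i`th component is `0` if `x i ≤ d i`, and `x i` otherwise. -/
def cutBelow (x d : ∀ i, L i) : ∀ i, L i := fun i => if x i ≤ d i then ⊥ else x i

/-- `[x]^d`: the tuple whose `i`th component is `1` if `x i ≥ d i`, and `x i` otherwise. -/
def cutAbove (x d : ∀ i, L i) : ∀ i, L i := fun i => if d i ≤ x i then ⊤ else x i

/-- `f` is pseudo-horizontally maxitive w.r.t. `φ` with common range `R`. -/
def PseudoHorizMax (f : (∀ i, L i) → M) (φ : ∀ i, L i → M) (R : Set M) : Prop :=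
  ∀ (x : ∀ i, L i), ∀ c ∈ R, ∀ d : ∀ i, L i, FiberAll φ c d →
    f x = f (fun i => x i ⊓ d i) ⊔ f (cutBelow x d)

/-- `f` is pseudo-horizontally minitive w.r.t. `φ` with common range `R`. -/
def PseudoHorizMin (f : (∀ i, L i) → M) (φ : ∀ i, L i → M) (R : Set M) : Prop :=
  ∀ (x : ∀ i, L i), ∀ c ∈ R, ∀ d : ∀ i, L i, FiberAll φ c d →
    f x = f (fun i => x i ⊔ d i) ⊓ f (cutAbove x d)

/-- `f` is pseudo-comonotonic minitive w.r.t. `φ`. -/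
def PseudoComonMin (f : (∀ i, L i) → M) (φ : ∀ i, L i → M) : Prop :=
  ∀ x x' : ∀ i, L i,
    Comonotone (fun i => φ i (x i)) (fun i => φ i (x' i)) →
      f (fun i => x i ⊓ x' i) = f x ⊓ f x'

/-- `f` is pseudo-comonotonic maxitive w.r.t. `φ`. -/
def PseudoComonMax (f : (∀ i, L i) → M) (φ : ∀ i, L i → M) : Prop :=
  ∀ x x' : ∀ i, L i,
    Comonotone (fun i => φ i (x i)) (fun i => φ i (x' i)) →
      f (fun i => x i ⊔ x' i) = f x ⊔ f x'

/-- The disjunctive normal form polynomial determined by the values of `f` on the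
characteristic vectors `e_I`: `y ↦ ⋁_{I ⊆ [n]} (f(e_I) ∧ ⋀_{i ∈ I} y i)`. -/
def qDNF (f : (∀ i, L i) → M) : (Fin n → M) → M :=
  fun y => Finset.univ.sup fun I : Finset (Fin n) =>
    f (fun i => if i ∈ I then ⊤ else ⊥) ⊓ I.inf y

end PiDefs

section ChainDefs

variable {n : ℕ} {M : Type*} [LinearOrder M] [BoundedOrder M]

/-- The DNF polynomial `y ↦ ⋁_{I ⊆ [n]} (p(e_I) ∧ ⋀_{i ∈ I} y i)` for `p : M^n → M`. -/
def polyDNF (p : (Fin n → M) → M) : (Fin n → M) → M :=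
  fun y => Finset.univ.sup fun I : Finset (Fin n) =>
    p (fun i => if i ∈ I then ⊤ else ⊥) ⊓ I.inf y

/-- The convex hull of the range of `p` (in a chain). -/
def clRan (p : (Fin n → M) → M) : Set M :=
  {c : M | ∃ a ∈ Set.range p, ∃ b ∈ Set.range p, a ≤ c ∧ c ≤ b}

/-- Median decomposability of `p : M^n → M`. -/
def MedianDecomp (p : (Fin n → M) → M) : Prop :=
  ∀ (x : Fin n → M) (k : Fin n),
    p x = med (p (update x k ⊥)) (x k) (p (update x k ⊤))

/-- `S`-min homogeneity: `p(x ∧ c) = p(x) ∧ c` for all `c ∈ S`. -/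
def MinHomogOn (p : (Fin n → M) → M) (S : Set M) : Prop :=
  ∀ (x : Fin n → M), ∀ c ∈ S, p (fun i => x i ⊓ c) = p x ⊓ c

/-- `S`-max homogeneity: `p(x ∨ c) = p(x) ∨ c` for all `c ∈ S`. -/
def MaxHomogOn (p : (Fin n → M) → M) (S : Set M) : Prop :=
  ∀ (x : Fin n → M), ∀ c ∈ S, p (fun i => x i ⊔ c) = p x ⊔ c

/-- Range-idempotence: `p(c,…,c) = c` for every `c` in the convex hull of the range. -/
def RangeIdempotent (p : (Fin n → M) → M) : Prop :=
  ∀ c ∈ clRan p, p (fun _ => c) = c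

/-- Horizontal minitivity: `p(x) = p(x ∨ c) ∧ p([x]^c)`. -/
def HorizMin (p : (Fin n → M) → M) : Prop :=
  ∀ (x : Fin n → M) (c : M),
    p x = p (fun i => x i ⊔ c) ⊓ p (fun i => if c ≤ x i then ⊤ else x i)

/-- Horizontal maxitivity: `p(x) = p(x ∧ c) ∨ p([x]_c)`. -/
def HorizMax (p : (Fin n → M) → M) : Prop :=
  ∀ (x : Fin n → M) (c : M),
    p x = p (fun i => x i ⊓ c) ⊔ p (fun i => if x i ≤ c then ⊥ else x i)

end ChainDefs

/-! Since `φ k ⊥ ≤ φ k ⊤` and the median is monotone in its middle argument, the median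
decomposition gives `f (x_k^0) ≤ f (x_k^1)`, hence `f x = f (x_k^0) ⊔ (φ k (x k) ⊓ f (x_k^1))`.
Applying this to the coordinates of a set `S` one at a time expresses `f x` as the join, over
`J ⊆ S`, of `f` at `x` with its `S`-coordinates replaced by `e_J`, met with
`⋀_{i ∈ J} φ i (x i)`. For `S` the set of all coordinates this is the disjunctive normal form,
which is a lattice polynomial in the `φ i (x i)`. -/

namespace IsLatticePolynomial

variable {n : ℕ} {M : Type*} [LinearOrder M]

lemma finset_sup [OrderBot M] {ι : Type*} (s : Finset ι) {p : ι → (Fin n → M) → M}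
    (hp : ∀ i ∈ s, IsLatticePolynomial (p i)) :
    IsLatticePolynomial fun x => s.sup fun i => p i x := by
  classical
  induction s using Finset.induction_on with
  | empty => exact const ⊥
  | insert a s _ ih =>
    simp only [Finset.sup_insert]
    exact sup (hp a (s.mem_insert_self a)) (ih fun i hi => hp i (Finset.mem_insert_of_mem hi))

lemma finset_inf [OrderTop M] {ι : Type*} (s : Finset ι) {p : ι → (Fin n → M) → M}
    (hp : ∀ i ∈ s, IsLatticePolynomial (p i)) :
    IsLatticePolynomial fun x => s.inf fun i => p i x := by
  classical
  induction s using Finset.induction_on with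
  | empty => exact const ⊤
  | insert a s _ ih =>
    simp only [Finset.inf_insert]
    exact inf (hp a (s.mem_insert_self a)) (ih fun i hi => hp i (Finset.mem_insert_of_mem hi))

end IsLatticePolynomial

lemma isLatticePolynomial_qDNF {n : ℕ} {M : Type*} {L : Fin n → Type*}
    [∀ i, LinearOrder (L i)] [∀ i, BoundedOrder (L i)] [LinearOrder M] [BoundedOrder M]
    (f : (∀ i, L i) → M) : IsLatticePolynomial (qDNF f) :=
  .finset_sup _ fun I _ => .inf (.const _) (.finset_inf I fun i _ => .proj i)

section Median

variable {α : Type*} [Lattice α] {a b b' c : α}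

lemma med_eq_sup_inf (h : a ≤ c) : med a b c = a ⊔ b ⊓ c := by
  rw [med, inf_eq_left.mpr h, sup_comm (a ⊓ b), sup_inf_self]

lemma med_le_med_middle (h : b ≤ b') : med a b c ≤ med a b' c := by
  unfold med
  gcongr

end Median

namespace PseudoMedianDecomp

open Finset

variable {n : ℕ} {M : Type*} {L : Fin n → Type*}
  [∀ i, LinearOrder (L i)] [∀ i, BoundedOrder (L i)] [LinearOrder M]
  {f : (∀ i, L i) → M} {φ : ∀ i, L i → M}

lemma apply_update_bot_le_apply_update_top (hmed : PseudoMedianDecomp f φ) (x : ∀ i, L i)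
    {k : Fin n} (hφ : φ k ⊥ ≤ φ k ⊤) : f (update x k ⊥) ≤ f (update x k ⊤) :=
  calc f (update x k ⊥)
      = med (f (update x k ⊥)) (φ k ⊥) (f (update x k ⊤)) := by simpa using hmed (update x k ⊥) k
    _ ≤ med (f (update x k ⊥)) (φ k ⊤) (f (update x k ⊤)) := med_le_med_middle hφ
    _ = f (update x k ⊤) := by simpa using (hmed (update x k ⊤) k).symm

lemma eq_sup_inf_update (hmed : PseudoMedianDecomp f φ) (x : ∀ i, L i) {k : Fin n}
    (hφ : φ k ⊥ ≤ φ k ⊤) : f x = f (update x k ⊥) ⊔ φ k (x k) ⊓ f (update x k ⊤) := by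
  rw [← med_eq_sup_inf (hmed.apply_update_bot_le_apply_update_top x hφ), ← hmed x k]

lemma eq_sup_powerset [BoundedOrder M] (hmed : PseudoMedianDecomp f φ)
    (hφ : ∀ k, φ k ⊥ ≤ φ k ⊤) (x : ∀ i, L i) (S : Finset (Fin n)) :
    f x = S.powerset.sup fun J =>
      f (J.piecewise ⊤ (S.piecewise ⊥ x)) ⊓ J.inf fun i => φ i (x i) := by
  induction S using Finset.induction_on with
  | empty => simp
  | insert k S hk ih =>
    rw [ih, powerset_insert, sup_union, sup_image, ← sup_sup]
    refine sup_congr rfl fun J hJ => ?_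
    have hkJ : k ∉ J := fun h => hk (mem_powerset.mp hJ h)
    set y := J.piecewise ⊤ (S.piecewise ⊥ x)
    have hy : y k = x k := by simp [y, hk, hkJ]
    have hbot : update y k ⊥ = J.piecewise ⊤ ((insert k S).piecewise ⊥ x) := by
      rw [J.update_piecewise_of_notMem _ _ hkJ, piecewise_insert, Pi.bot_apply]
    have htop : update y k ⊤ = (insert k J).piecewise ⊤ ((insert k S).piecewise ⊥ x) := by
      rw [piecewise_insert, ← hbot, update_idem, Pi.top_apply]
    rw [hmed.eq_sup_inf_update y (hφ k), hy, hbot, htop]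
    simp only [Pi.sup_apply, Function.comp_apply, inf_insert, inf_sup_right]
    ac_rfl

end PseudoMedianDecomp

/-- if `f` is pseudo-median decomposable w.r.t. unary maps `φ i` satisfying
the boundary conditions, then `f(x) = ⋁_{I ⊆ [n]} (f(e_I) ∧ ⋀_{i∈I} φ i (x i))`, i.e.
`f(x) = p(φ₁(x₁),…,φₙ(xₙ))` where `p` is the (polynomial) function `qDNF f`. -/
theorem pseudoMedianDecomp_dnf
    {n : ℕ} {M : Type*} {L : Fin n → Type*}
    [∀ i, LinearOrder (L i)] [∀ i, BoundedOrder (L i)]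
    [LinearOrder M] [BoundedOrder M] (f : (∀ i, L i) → M) (φ : ∀ i, L i → M)
    (hφ : ∀ i, BoundaryCond (φ i)) (hmed : PseudoMedianDecomp f φ) :
    (∀ x, f x = (Finset.univ : Finset (Finset (Fin n))).sup fun I =>
        f (fun i => if i ∈ I then ⊤ else ⊥) ⊓ I.inf fun i => φ i (x i)) ∧
    IsLatticePolynomial (qDNF f) := by
  refine ⟨fun x => ?_, isLatticePolynomial_qDNF f⟩
  rw [hmed.eq_sup_powerset (fun k => (hφ k ⊥).2) x Finset.univ, Finset.powerset_univ]
  simp only [Finset.piecewise_univ]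
  rfl
end

section
/- A function f : L_1 × ⋯ × L_n → L is a Sugeno utility function if and only if it is an order-preserving pseudo-Sugeno integral. -/
open Function

section SugenoAux
set_option linter.unusedSectionVars false

open Finset

variable {n : ℕ} {M : Type*} {L : Fin n → Type*}
variable [∀ i, LinearOrder (L i)] [∀ i, BoundedOrder (L i)]
variable [LinearOrder M] [BoundedOrder M]

private lemma polyMono {p : (Fin n → M) → M} (hp : IsLatticePolynomial p) : Monotone p := by
  induction hp with
  | proj i => exact fun a b h => h i
  | const c => exact fun a b _ => le_rfl
  | inf hp hq ihp ihq => exact fun a b h => inf_le_inf (ihp h) (ihq h)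
  | sup hp hq ihp ihq => exact fun a b h => sup_le_sup (ihp h) (ihq h)

private lemma clamp_inf {α : Type*} [LinearOrder α] (t a b a' b' : α)
    (h : a ≤ b) (h' : a' ≤ b') :
    ((t ⊓ b) ⊔ a) ⊓ ((t ⊓ b') ⊔ a') = (t ⊓ (b ⊓ b')) ⊔ (a ⊓ a') := by
  apply le_antisymm
  · rw [inf_sup_right, inf_sup_left, inf_sup_left]
    apply sup_le
    · apply sup_le
      · refine le_sup_of_le_left (le_inf (inf_le_left.trans inf_le_left) (le_inf ?_ ?_))
        · exact inf_le_left.trans inf_le_right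
        · exact inf_le_right.trans inf_le_right
      · refine le_sup_of_le_left (le_inf (inf_le_left.trans inf_le_left) (le_inf ?_ ?_))
        · exact inf_le_left.trans inf_le_right
        · exact inf_le_right.trans h'
    · apply sup_le
      · refine le_sup_of_le_left (le_inf (inf_le_right.trans inf_le_left) (le_inf ?_ ?_))
        · exact inf_le_left.trans h
        · exact inf_le_right.trans inf_le_right
      · exact le_sup_right
  · apply sup_le
    · refine le_inf (le_sup_of_le_left ?_) (le_sup_of_le_left ?_)
      · exact le_inf inf_le_left (inf_le_right.trans inf_le_left)
      · exact le_inf inf_le_left (inf_le_right.trans inf_le_right)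
    · exact le_inf (le_sup_of_le_right inf_le_left) (le_sup_of_le_right inf_le_right)

private lemma clamp_sup {α : Type*} [LinearOrder α] (t a b a' b' : α) :
    ((t ⊓ b) ⊔ a) ⊔ ((t ⊓ b') ⊔ a') = (t ⊓ (b ⊔ b')) ⊔ (a ⊔ a') := by
  rw [sup_sup_sup_comm, ← inf_sup_left]

private lemma upd_le_upd {ι : Type*} [DecidableEq ι] {β : ι → Type*} [∀ i, Preorder (β i)]
    (x : ∀ i, β i) (k : ι) {a b : β k} (h : a ≤ b) :
    Function.update x k a ≤ Function.update x k b := by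
  intro i
  rcases eq_or_ne i k with rfl | hik
  · simpa using h
  · simp [Function.update_of_ne hik]

private lemma polyMed {p : (Fin n → M) → M} (hp : IsLatticePolynomial p) :
    ∀ (y : Fin n → M) (k : Fin n),
      p y = (y k ⊓ p (update y k ⊤)) ⊔ p (update y k ⊥) := by
  induction hp with
  | proj i =>
    intro y k
    rcases eq_or_ne i k with rfl | h
    · simp
    · show y i = (y k ⊓ update y k ⊤ i) ⊔ update y k ⊥ i
      rw [Function.update_of_ne h, Function.update_of_ne h]
      exact (sup_eq_right.mpr inf_le_right).symm
  | const c => exact fun y k => (sup_eq_right.mpr inf_le_right).symm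
  | @inf p' q' hp' hq' ihp ihq =>
    intro y k
    show p' y ⊓ q' y = (y k ⊓ (p' (update y k ⊤) ⊓ q' (update y k ⊤))) ⊔
      (p' (update y k ⊥) ⊓ q' (update y k ⊥))
    rw [ihp y k, ihq y k]
    exact clamp_inf (y k) _ _ _ _
      (polyMono hp' (upd_le_upd y k bot_le)) (polyMono hq' (upd_le_upd y k bot_le))
  | @sup p' q' hp' hq' ihp ihq =>
    intro y k
    show p' y ⊔ q' y = (y k ⊓ (p' (update y k ⊤) ⊔ q' (update y k ⊤))) ⊔
      (p' (update y k ⊥) ⊔ q' (update y k ⊥))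
    rw [ihp y k, ihq y k]
    exact clamp_sup (y k) _ _ _ _

private lemma polyMedCap {q : (Fin n → M) → M} (hq : IsLatticePolynomial q)
    (y : Fin n → M) (k : Fin n) {c d : M} (hd : d ≤ y k) (hc : y k ≤ c) :
    q y = (y k ⊓ q (update y k c)) ⊔ q (update y k d) := by
  have h1 := polyMed hq y k
  have h2 : q (update y k c) = (c ⊓ q (update y k ⊤)) ⊔ q (update y k ⊥) := by
    have h0 := polyMed hq (update y k c) k
    simpa [Function.update_idem, Function.update_self] using h0
  have h3 : q (update y k d) = (d ⊓ q (update y k ⊤)) ⊔ q (update y k ⊥) := by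
    have h0 := polyMed hq (update y k d) k
    simpa [Function.update_idem, Function.update_self] using h0
  rw [h1, h2, h3]
  apply le_antisymm
  · apply sup_le
    · exact le_sup_of_le_left
        (le_inf inf_le_left ((inf_le_inf_right _ hc).trans le_sup_left))
    · exact le_sup_of_le_right le_sup_right
  · apply sup_le
    · rw [inf_sup_left]
      apply sup_le
      · exact le_sup_of_le_left (le_inf inf_le_left (inf_le_right.trans inf_le_right))
      · exact le_sup_of_le_right inf_le_right
    · apply sup_le
      · exact le_sup_of_le_left (inf_le_inf_right _ hd)
      · exact le_sup_right
  -- note: the ⊥-summand q(update y k ⊥) appears as A; handled by le_sup_right chains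

variable (f : (∀ i, L i) → M)

private def eTup (S : Finset (Fin n)) : ∀ i, L i := fun i => if i ∈ S then ⊤ else ⊥

open Classical in
private noncomputable def psiAux (φ : ∀ i, L i → M) (k : Fin n) (a : L k) : M :=
  f ⊥ ⊔ Finset.univ.sup fun S : Finset (Fin n) =>
    if f (update (eTup S) k ⊥) < φ k a ∧
        f (update (eTup S) k ⊥) < f (update (eTup S) k ⊤) then
      φ k a ⊓ f (update (eTup S) k ⊤)
    else ⊥

private lemma claimCorner {φ : ∀ i, L i → M} (hmono : Monotone f)
    (hf : ∀ (x : ∀ i, L i) (k : Fin n),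
      f x = (φ k (x k) ⊓ f (update x k ⊤)) ⊔ f (update x k ⊥))
    (k : Fin n) (z : M) :
    ∀ (T : Finset (Fin n)) (x : ∀ i, L i),
      (∀ j, j ∉ T → j ≠ k → x j = ⊥ ∨ x j = ⊤) →
      f (update x k ⊥) < z → z ≤ f (update x k ⊤) →
      ∃ S : Finset (Fin n),
        f (update (eTup (L := L) S) k ⊥) < z ∧ z ≤ f (update (eTup (L := L) S) k ⊤) := by
  intro T
  classical
  induction T using Finset.induction_on with
  | empty =>
    intro x hx hA hB
    refine ⟨Finset.univ.filter (fun j => x j = ⊤), ?_, ?_⟩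
    · have e1 : update (eTup (L := L) (Finset.univ.filter (fun j => x j = ⊤))) k (⊥ : L k)
          = update x k ⊥ := by
        funext i
        rcases eq_or_ne i k with rfl | h
        · simp
        · rw [Function.update_of_ne h, Function.update_of_ne h]
          simp only [eTup, Finset.mem_filter, Finset.mem_univ, true_and]
          by_cases hi : x i = ⊤
          · rw [if_pos hi, hi]
          · rw [if_neg hi]
            rcases hx i (Finset.notMem_empty i) h with h2 | h2
            · exact h2.symm
            · exact absurd h2 hi
      rw [e1]; exact hA
    · have e2 : update (eTup (L := L) (Finset.univ.filter (fun j => x j = ⊤))) k (⊤ : L k)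
          = update x k ⊤ := by
        funext i
        rcases eq_or_ne i k with rfl | h
        · simp
        · rw [Function.update_of_ne h, Function.update_of_ne h]
          simp only [eTup, Finset.mem_filter, Finset.mem_univ, true_and]
          by_cases hi : x i = ⊤
          · rw [if_pos hi, hi]
          · rw [if_neg hi]
            rcases hx i (Finset.notMem_empty i) h with h2 | h2
            · exact h2.symm
            · exact absurd h2 hi
      rw [e2]; exact hB
  | @insert j T hj ih =>
    intro x hx hA hB
    rcases eq_or_ne j k with rfl | hjk
    · exact ih x (fun j' hj' hj'k =>
        hx j' (fun h => ((Finset.mem_insert.mp h).elim hj'k hj')) hj'k) hA hB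
    · by_cases hz : z ≤ f (update (update x j ⊥) k ⊤)
      · refine ih (update x j ⊥) ?_ ?_ hz
        · intro j' hj' hj'k
          rcases eq_or_ne j' j with rfl | hj'j
          · left; simp
          · rw [Function.update_of_ne hj'j]
            exact hx j' (fun h => ((Finset.mem_insert.mp h).elim hj'j hj')) hj'k
        · refine lt_of_le_of_lt ?_ hA
          apply hmono
          intro i
          rcases eq_or_ne i k with rfl | hik
          · simp
          · rw [Function.update_of_ne hik, Function.update_of_ne hik]
            rcases eq_or_ne i j with rfl | hij
            · simp
            · rw [Function.update_of_ne hij]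
      · push_neg at hz
        have hBdec : f (update x k ⊤) =
            (φ j (x j) ⊓ f (update (update x j ⊤) k ⊤)) ⊔ f (update (update x j ⊥) k ⊤) := by
          have h0 := hf (update x k ⊤) j
          rw [Function.update_of_ne hjk, Function.update_comm (Ne.symm hjk),
            Function.update_comm (Ne.symm hjk)] at h0
          exact h0
        have hzt : z ≤ φ j (x j) ⊓ f (update (update x j ⊤) k ⊤) := by
          rw [hBdec] at hB
          rcases le_sup_iff.mp hB with h | h
          · exact h
          · exact absurd h (not_le.mpr hz)
        have hAdec : f (update x k ⊥) =
            (φ j (x j) ⊓ f (update (update x j ⊤) k ⊥)) ⊔ f (update (update x j ⊥) k ⊥) := by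
          have h0 := hf (update x k ⊥) j
          rw [Function.update_of_ne hjk, Function.update_comm (Ne.symm hjk),
            Function.update_comm (Ne.symm hjk)] at h0
          exact h0
        have hA2 : f (update (update x j ⊤) k ⊥) < z := by
          rw [hAdec] at hA
          have h1 : φ j (x j) ⊓ f (update (update x j ⊤) k ⊥) < z :=
            lt_of_le_of_lt le_sup_left hA
          rcases inf_lt_iff.mp h1 with h | h
          · exact absurd h (not_lt.mpr (hzt.trans inf_le_left))
          · exact h
        refine ih (update x j ⊤) ?_ hA2 (hzt.trans inf_le_right)
        intro j' hj' hj'k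
        rcases eq_or_ne j' j with rfl | hj'j
        · right; simp
        · rw [Function.update_of_ne hj'j]
          exact hx j' (fun h => ((Finset.mem_insert.mp h).elim hj'j hj')) hj'k

private lemma psiMono {φ : ∀ i, L i → M} (hmono : Monotone f)
    (hf : ∀ (x : ∀ i, L i) (k : Fin n),
      f x = (φ k (x k) ⊓ f (update x k ⊤)) ⊔ f (update x k ⊥))
    (k : Fin n) : Monotone (psiAux f φ k) := by
  intro a a' haa'
  unfold psiAux
  refine sup_le_sup_left (Finset.sup_mono_fun ?_) _
  intro S _
  have hcorner : (φ k a ⊓ f (update (eTup (L := L) S) k ⊤)) ⊔ f (update (eTup (L := L) S) k ⊥)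
      ≤ (φ k a' ⊓ f (update (eTup (L := L) S) k ⊤)) ⊔ f (update (eTup (L := L) S) k ⊥) := by
    have e1 := hf (update (eTup (L := L) S) k a) k
    have e2 := hf (update (eTup (L := L) S) k a') k
    rw [Function.update_self, Function.update_idem, Function.update_idem] at e1 e2
    rw [← e1, ← e2]
    exact hmono (upd_le_upd _ k haa')
  by_cases h1 : f (update (eTup (L := L) S) k ⊥) < φ k a ∧
      f (update (eTup (L := L) S) k ⊥) < f (update (eTup (L := L) S) k ⊤)
  · by_cases h2 : f (update (eTup (L := L) S) k ⊥) < φ k a' ∧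
        f (update (eTup (L := L) S) k ⊥) < f (update (eTup (L := L) S) k ⊤)
    · rw [if_pos h1, if_pos h2]
      have hlt' : f (update (eTup (L := L) S) k ⊥) < φ k a' ⊓ f (update (eTup (L := L) S) k ⊤) :=
        lt_inf_iff.mpr ⟨h2.1, h2.2⟩
      calc φ k a ⊓ f (update (eTup (L := L) S) k ⊤)
          ≤ (φ k a ⊓ f (update (eTup (L := L) S) k ⊤)) ⊔ f (update (eTup (L := L) S) k ⊥) :=
            le_sup_left
        _ ≤ (φ k a' ⊓ f (update (eTup (L := L) S) k ⊤)) ⊔ f (update (eTup (L := L) S) k ⊥) :=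
            hcorner
        _ = φ k a' ⊓ f (update (eTup (L := L) S) k ⊤) := sup_eq_left.mpr hlt'.le
    · rw [if_pos h1, if_neg h2]
      exfalso
      have hp' : φ k a' ≤ f (update (eTup (L := L) S) k ⊥) := by
        by_contra hcon
        exact h2 ⟨not_le.mp hcon, h1.2⟩
      have hlt : f (update (eTup (L := L) S) k ⊥) < φ k a ⊓ f (update (eTup (L := L) S) k ⊤) :=
        lt_inf_iff.mpr ⟨h1.1, h1.2⟩
      have heq : (φ k a' ⊓ f (update (eTup (L := L) S) k ⊤)) ⊔ f (update (eTup (L := L) S) k ⊥)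
          = f (update (eTup (L := L) S) k ⊥) :=
        sup_eq_right.mpr (inf_le_left.trans hp')
      exact absurd ((lt_of_lt_of_le hlt le_sup_left).trans_le (hcorner.trans heq.le))
        (lt_irrefl _)
  · rw [if_neg h1]
    exact bot_le

private lemma psiMed {φ : ∀ i, L i → M} (hmono : Monotone f)
    (hf : ∀ (x : ∀ i, L i) (k : Fin n),
      f x = (φ k (x k) ⊓ f (update x k ⊤)) ⊔ f (update x k ⊥)) :
    ∀ (x : ∀ i, L i) (k : Fin n),
      f x = (psiAux f φ k (x k) ⊓ f (update x k ⊤)) ⊔ f (update x k ⊥) := by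
  intro x k
  have hAB : f (update x k ⊥) ≤ f (update x k ⊤) := hmono (upd_le_upd x k bot_le)
  rcases le_or_gt (φ k (x k)) (f (update x k ⊥)) with hpA | hAp
  · have hψA : psiAux f φ k (x k) ≤ f (update x k ⊥) := by
      unfold psiAux
      refine sup_le (hmono bot_le) (Finset.sup_le fun S _ => ?_)
      split_ifs
      · exact inf_le_left.trans hpA
      · exact bot_le
    rw [hf x k, sup_eq_right.mpr (inf_le_left.trans hpA),
      sup_eq_right.mpr (inf_le_left.trans hψA)]
  · rcases le_or_gt (f (update x k ⊤)) (φ k (x k)) with hBp | hpB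
    · rcases eq_or_lt_of_le hAB with hABeq | hABlt
      · rw [hf x k, inf_eq_right.mpr hBp, sup_eq_left.mpr hAB,
          sup_eq_right.mpr (inf_le_right.trans hABeq.ge)]
        exact hABeq.symm
      · obtain ⟨S, hSA, hSB⟩ := claimCorner f hmono hf k (f (update x k ⊤)) Finset.univ x
          (fun j hj _ => absurd (Finset.mem_univ j) hj) hABlt le_rfl
        have hcond : f (update (eTup (L := L) S) k ⊥) < φ k (x k) ∧
            f (update (eTup (L := L) S) k ⊥) < f (update (eTup (L := L) S) k ⊤) :=
          ⟨hSA.trans_le hBp, hSA.trans_le hSB⟩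
        have hup : f (update x k ⊤) ≤ psiAux f φ k (x k) := by
          unfold psiAux
          refine le_trans ?_ le_sup_right
          refine le_trans ?_ (Finset.le_sup (Finset.mem_univ S))
          rw [if_pos hcond]
          exact le_inf hBp hSB
        rw [hf x k, inf_eq_right.mpr hBp, inf_eq_right.mpr hup]
    · obtain ⟨S, hSA, hSB⟩ := claimCorner f hmono hf k (φ k (x k)) Finset.univ x
        (fun j hj _ => absurd (Finset.mem_univ j) hj) hAp hpB.le
      have hcond : f (update (eTup (L := L) S) k ⊥) < φ k (x k) ∧
          f (update (eTup (L := L) S) k ⊥) < f (update (eTup (L := L) S) k ⊤) :=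
        ⟨hSA, hSA.trans_le hSB⟩
      have hge : φ k (x k) ≤ psiAux f φ k (x k) := by
        unfold psiAux
        refine le_trans ?_ le_sup_right
        refine le_trans ?_ (Finset.le_sup (Finset.mem_univ S))
        rw [if_pos hcond]
        exact le_inf le_rfl hSB
      have hle : psiAux f φ k (x k) ≤ φ k (x k) := by
        unfold psiAux
        refine sup_le ((hmono bot_le).trans hAp.le) (Finset.sup_le fun S' _ => ?_)
        split_ifs
        · exact inf_le_left
        · exact bot_le
      rw [hf x k, le_antisymm hle hge]

private lemma dnfRep {ψ : ∀ i, L i → M}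
    (hdec : ∀ (x : ∀ i, L i) (k : Fin n),
      f x = (ψ k (x k) ⊓ f (update x k ⊤)) ⊔ f (update x k ⊥)) :
    ∀ x : ∀ i, L i,
      f x = Finset.univ.sup fun I : Finset (Fin n) =>
        f (eTup (L := L) I) ⊓ I.inf fun i => ψ i (x i) := by
  classical
  have aux : ∀ K : Finset (Fin n), ∀ x : ∀ i, L i,
      f x = K.powerset.sup fun I =>
        f (fun i => if i ∈ K then (if i ∈ I then (⊤ : L i) else ⊥) else x i) ⊓
          I.inf fun i => ψ i (x i) := by
    intro K
    induction K using Finset.induction_on with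
    | empty =>
      intro x
      simp
    | @insert a K ha ih =>
      intro x
      rw [hdec x a, ih (update x a ⊤), ih (update x a ⊥), Finset.sup_inf_distrib_left,
        Finset.powerset_insert, Finset.sup_union, Finset.sup_image]
      refine Eq.trans (sup_comm _ _) (congrArg₂ (· ⊔ ·) ?_ ?_)
      · refine Finset.sup_congr rfl fun I hI => ?_
        have haI : a ∉ I := fun h => ha (Finset.mem_powerset.mp hI h)
        have h1 : (fun i => if i ∈ K then (if i ∈ I then (⊤ : L i) else ⊥)
              else update x a ⊥ i)
            = fun i => if i ∈ insert a K then (if i ∈ I then (⊤ : L i) else ⊥) else x i := by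
          funext i
          rcases eq_or_ne i a with rfl | hia
          · simp [ha, haI]
          · by_cases hiK : i ∈ K
            · simp [hiK, Finset.mem_insert, hia]
            · simp [hiK, Finset.mem_insert, hia, Function.update_of_ne hia]
        have h2 : (I.inf fun i => ψ i (update x a ⊥ i)) = I.inf fun i => ψ i (x i) :=
          Finset.inf_congr rfl fun i hi => by
            rw [Function.update_of_ne (by rintro rfl; exact haI hi)]
        rw [h1, h2]
      · refine Finset.sup_congr rfl fun I hI => ?_
        have haI : a ∉ I := fun h => ha (Finset.mem_powerset.mp hI h)
        have h1 : (fun i => if i ∈ K then (if i ∈ I then (⊤ : L i) else ⊥)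
              else update x a ⊤ i)
            = fun i => if i ∈ insert a K then (if i ∈ insert a I then (⊤ : L i) else ⊥)
                else x i := by
          funext i
          rcases eq_or_ne i a with rfl | hia
          · simp [ha]
          · by_cases hiK : i ∈ K
            · simp [hiK, Finset.mem_insert, hia]
            · simp [hiK, Finset.mem_insert, hia, Function.update_of_ne hia]
        have h2 : (I.inf fun i => ψ i (update x a ⊤ i)) = I.inf fun i => ψ i (x i) :=
          Finset.inf_congr rfl fun i hi => by
            rw [Function.update_of_ne (by rintro rfl; exact haI hi)]
        simp only [Function.comp_apply]
        rw [h1, h2, Finset.inf_insert, inf_left_comm]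
  intro x
  rw [aux Finset.univ x, Finset.powerset_univ]
  refine Finset.sup_congr rfl fun I _ => ?_
  have he : (fun i => if i ∈ Finset.univ then (if i ∈ I then (⊤ : L i) else ⊥) else x i)
      = eTup (L := L) I := by
    funext i; simp [eTup]
  rw [he]

private lemma polyFinsetSup {ι : Type*} (s : Finset ι) (F : ι → (Fin n → M) → M)
    (hF : ∀ i ∈ s, IsLatticePolynomial (F i)) :
    IsLatticePolynomial fun y => s.sup fun i => F i y := by
  classical
  revert hF
  induction s using Finset.induction_on with
  | empty =>
    intro _
    simp only [Finset.sup_empty]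
    exact IsLatticePolynomial.const ⊥
  | @insert a s ha ih =>
    intro hF
    have heq : (fun y => (insert a s).sup fun i => F i y)
        = fun y => F a y ⊔ s.sup fun i => F i y := by
      funext y; rw [Finset.sup_insert]
    rw [heq]
    exact (hF a (Finset.mem_insert_self a s)).sup
      (ih fun i hi => hF i (Finset.mem_insert_of_mem hi))

private lemma polyFinsetInf (I : Finset (Fin n)) :
    IsLatticePolynomial fun y : Fin n → M => I.inf y := by
  classical
  induction I using Finset.induction_on with
  | empty =>
    simp only [Finset.inf_empty]
    exact IsLatticePolynomial.const ⊤
  | @insert a s ha ih =>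
    have heq : (fun y : Fin n → M => (insert a s).inf y) = fun y => y a ⊓ s.inf y := by
      funext y; rw [Finset.inf_insert]
    rw [heq]
    exact (IsLatticePolynomial.proj a).inf ih

end SugenoAux

/-- the Sugeno utility functions are exactly the order-preserving
pseudo-Sugeno integrals. -/
theorem sugenoUtility_iff_monotone_pseudoSugenoIntegral
    {n : ℕ} {M : Type*} {L : Fin n → Type*}
    [∀ i, LinearOrder (L i)] [∀ i, BoundedOrder (L i)]
    [LinearOrder M] [BoundedOrder M] (f : (∀ i, L i) → M) :
    IsSugenoUtility f ↔ Monotone f ∧ IsPseudoSugenoIntegral f := by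
  constructor
  · rintro ⟨q, φ, hq, hφ, hfeq⟩
    have hmono : Monotone f := by
      intro x y hxy
      rw [hfeq x, hfeq y]
      exact polyMono hq.1 fun i => hφ i (hxy i)
    exact ⟨hmono, q, φ, hq, fun i x => ⟨hφ i bot_le, hφ i le_top⟩, hfeq⟩
  · rintro ⟨hmono, q, φ, hq, hφb, hfeq⟩
    rcases Nat.eq_zero_or_pos n with hn | hn
    · subst hn
      exact ⟨q, φ, hq, fun i => i.elim0, hfeq⟩
    · have i₀ : Fin n := ⟨0, hn⟩
      have hf : ∀ (x : ∀ i, L i) (k : Fin n),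
          f x = (φ k (x k) ⊓ f (update x k ⊤)) ⊔ f (update x k ⊥) := by
        intro x k
        have hcap := polyMedCap hq.1 (fun i => φ i (x i)) k (hφb k (x k)).1 (hφb k (x k)).2
        have etop : (fun i => φ i (update x k ⊤ i)) = update (fun i => φ i (x i)) k (φ k ⊤) := by
          funext i
          rcases eq_or_ne i k with rfl | h
          · simp
          · simp [Function.update_of_ne h]
        have ebot : (fun i => φ i (update x k ⊥ i)) = update (fun i => φ i (x i)) k (φ k ⊥) := by
          funext i
          rcases eq_or_ne i k with rfl | h
          · simp
          · simp [Function.update_of_ne h]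
        rw [hfeq x, hfeq (update x k ⊤), hfeq (update x k ⊥), etop, ebot]
        exact hcap
      have hψmed := psiMed f hmono hf
      have hDNF := dnfRep f hψmed
      have hψtop : ∀ (i : Fin n) (a : L i), psiAux f φ i a ≤ f ⊤ := by
        intro i a
        unfold psiAux
        refine sup_le (hmono bot_le) (Finset.sup_le fun S _ => ?_)
        split_ifs
        · exact inf_le_right.trans (hmono le_top)
        · exact bot_le
      have hψbot : ∀ (i : Fin n) (a : L i), f ⊥ ≤ psiAux f φ i a := by
        intro i a
        unfold psiAux
        exact le_sup_left
      have hET : eTup (L := L) Finset.univ = ⊤ := by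
        funext i; simp [eTup]
      have hEB : eTup (L := L) (∅ : Finset (Fin n)) = ⊥ := by
        funext i; simp [eTup]
      refine ⟨fun y => (Finset.univ.sup (fun I : Finset (Fin n) =>
          f (eTup (L := L) I) ⊓ I.inf y) ⊓ Finset.univ.sup y) ⊔ Finset.univ.inf y,
        fun i => psiAux f φ i, ⟨?_, ?_⟩, fun i => psiMono f hmono hf i, ?_⟩
      · apply IsLatticePolynomial.sup
        · apply IsLatticePolynomial.inf
          · exact polyFinsetSup Finset.univ _ fun I _ =>
              (IsLatticePolynomial.const (f (eTup (L := L) I))).inf (polyFinsetInf I)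
          · exact polyFinsetSup Finset.univ (fun i => fun y => y i)
              fun i _ => IsLatticePolynomial.proj i
        · exact polyFinsetInf Finset.univ
      · intro c
        have h1 := Finset.sup_const
          (⟨i₀, Finset.mem_univ i₀⟩ : (Finset.univ : Finset (Fin n)).Nonempty) c
        have h2 := Finset.inf_const
          (⟨i₀, Finset.mem_univ i₀⟩ : (Finset.univ : Finset (Fin n)).Nonempty) c
        simp only [h1, h2]
        exact sup_eq_right.mpr inf_le_right
      · intro x
        have hlow : (Finset.univ.inf fun i => psiAux f φ i (x i)) ≤ f x := by
          have hle : (Finset.univ.inf fun i => psiAux f φ i (x i))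
              ≤ f (eTup (L := L) Finset.univ) := by
            rw [hET]
            exact (Finset.inf_le (Finset.mem_univ i₀)).trans (hψtop i₀ (x i₀))
          calc (Finset.univ.inf fun i => psiAux f φ i (x i))
              ≤ f (eTup (L := L) Finset.univ) ⊓
                Finset.univ.inf fun i => psiAux f φ i (x i) := le_inf hle le_rfl
            _ ≤ Finset.univ.sup (fun I : Finset (Fin n) =>
                f (eTup (L := L) I) ⊓ I.inf fun i => psiAux f φ i (x i)) :=
                Finset.le_sup (f := fun I : Finset (Fin n) =>
                  f (eTup (L := L) I) ⊓ I.inf fun i => psiAux f φ i (x i))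
                  (Finset.mem_univ Finset.univ)
            _ = f x := (hDNF x).symm
        have hhigh : f x ≤ Finset.univ.sup fun i => psiAux f φ i (x i) := by
          rw [hDNF x]
          refine Finset.sup_le fun I _ => ?_
          rcases I.eq_empty_or_nonempty with rfl | ⟨j, hj⟩
          · refine inf_le_left.trans ?_
            rw [hEB]
            exact (hψbot i₀ (x i₀)).trans
              (Finset.le_sup (f := fun i => psiAux f φ i (x i)) (Finset.mem_univ i₀))
          · exact inf_le_right.trans
              ((Finset.inf_le hj).trans
                (Finset.le_sup (f := fun i => psiAux f φ i (x i)) (Finset.mem_univ j)))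
        have hfin : (Finset.univ.sup (fun I : Finset (Fin n) =>
            f (eTup (L := L) I) ⊓ I.inf fun i => psiAux f φ i (x i)) ⊓
              Finset.univ.sup fun i => psiAux f φ i (x i)) ⊔
              (Finset.univ.inf fun i => psiAux f φ i (x i)) = f x := by
          rw [← hDNF x, inf_eq_left.mpr hhigh]
          exact sup_eq_left.mpr hlow
        exact hfin.symm
end

section
/- If f(x_1,…,x_n) = q(φ_1(x_1),…,φ_n(x_n)) for some Sugeno integral q : L^n → L and local utility functions φ_1,…,φ_n with common range R ⊆ L, then f is pseudo-min homogeneous and pseudo-max homogeneous w.r.t. φ_1,…,φ_n. -/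
open Function

section Aux
variable {M : Type*} [LinearOrder M]

lemma chain_inf_aux {a b c a0 b0 : M} (ha : a0 ≤ a) (hb : b0 ≤ b) :
    ((a ⊓ c) ⊔ a0) ⊓ ((b ⊓ c) ⊔ b0) = ((a ⊓ b) ⊓ c) ⊔ (a0 ⊓ b0) := by
  apply le_antisymm
  · rw [inf_sup_right]
    apply sup_le
    · rw [inf_sup_left]
      apply sup_le
      · exact le_sup_of_le_left (le_inf (le_inf (inf_le_left.trans inf_le_left)
          (inf_le_right.trans inf_le_left)) (inf_le_left.trans inf_le_right))
      · exact le_sup_of_le_left (le_inf (le_inf (inf_le_left.trans inf_le_left)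
          (inf_le_right.trans hb)) (inf_le_left.trans inf_le_right))
    · rw [inf_sup_left]
      apply sup_le
      · exact le_sup_of_le_left (le_inf (le_inf (inf_le_left.trans ha)
          (inf_le_right.trans inf_le_left)) (inf_le_right.trans inf_le_right))
      · exact le_sup_of_le_right le_rfl
  · apply sup_le
    · exact le_inf (le_sup_of_le_left (le_inf (inf_le_left.trans inf_le_left) inf_le_right))
        (le_sup_of_le_left (le_inf (inf_le_left.trans inf_le_right) inf_le_right))
    · exact le_inf (le_sup_of_le_right inf_le_left) (le_sup_of_le_right inf_le_right)

lemma chain_sup_aux {a b c a1 b1 : M} (ha : a ≤ a1) (hb : b ≤ b1) :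
    ((a ⊔ c) ⊓ a1) ⊔ ((b ⊔ c) ⊓ b1) = ((a ⊔ b) ⊔ c) ⊓ (a1 ⊔ b1) := by
  have := chain_inf_aux (M := Mᵒᵈ) (a := OrderDual.toDual a) (b := OrderDual.toDual b)
    (c := OrderDual.toDual c) (a0 := OrderDual.toDual a1) (b0 := OrderDual.toDual b1) ha hb
  exact this

lemma IsLatticePolynomial.monotone {n : ℕ} {p : (Fin n → M) → M}
    (h : IsLatticePolynomial p) : Monotone p := by
  induction h with
  | proj i => exact fun a b hab => hab i
  | const c => exact monotone_const
  | inf hp hq ihp ihq => exact fun a b hab => inf_le_inf (ihp hab) (ihq hab)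
  | sup hp hq ihp ihq => exact fun a b hab => sup_le_sup (ihp hab) (ihq hab)

lemma IsLatticePolynomial.inf_const [BoundedOrder M] {n : ℕ} {p : (Fin n → M) → M}
    (h : IsLatticePolynomial p) (x : Fin n → M) (c : M) :
    p (fun i => x i ⊓ c) = (p x ⊓ c) ⊔ p (fun _ => ⊥) := by
  induction h with
  | proj i => simp
  | const a => simp
  | @inf p q hp hq ihp ihq =>
    simp only [ihp, ihq]
    exact chain_inf_aux (hp.monotone fun i => bot_le) (hq.monotone fun i => bot_le)
  | @sup p q hp hq ihp ihq =>
    simp only [ihp, ihq]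
    rw [sup_sup_sup_comm, ← inf_sup_right]

lemma IsLatticePolynomial.sup_const [BoundedOrder M] {n : ℕ} {p : (Fin n → M) → M}
    (h : IsLatticePolynomial p) (x : Fin n → M) (c : M) :
    p (fun i => x i ⊔ c) = (p x ⊔ c) ⊓ p (fun _ => ⊤) := by
  induction h with
  | proj i => simp
  | const a => simp
  | @inf p q hp hq ihp ihq =>
    simp only [ihp, ihq]
    rw [inf_inf_inf_comm, ← sup_inf_right]
  | @sup p q hp hq ihp ihq =>
    simp only [ihp, ihq]
    exact chain_sup_aux (hp.monotone fun i => le_top) (hq.monotone fun i => le_top)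

end Aux

/-- a Sugeno utility function `f(x) = q(φ₁(x₁),…,φₙ(xₙ))` is pseudo-min
homogeneous and pseudo-max homogeneous w.r.t. the local utility functions `φ i`. -/
theorem pseudoHomog_of_sugenoUtility
    {n : ℕ} {M : Type*} {L : Fin n → Type*}
    [∀ i, LinearOrder (L i)] [∀ i, BoundedOrder (L i)]
    [LinearOrder M] [BoundedOrder M] (f : (∀ i, L i) → M)
    (q : (Fin n → M) → M) (φ : ∀ i, L i → M) (R : Set M)
    (hq : IsSugenoIntegral q) (hφ : ∀ i, Monotone (φ i)) (hR : ∀ i, Set.range (φ i) = R)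
    (hfq : ∀ x, f x = q fun i => φ i (x i)) :
    PseudoMinHomog f φ R ∧ PseudoMaxHomog f φ R := by
  obtain ⟨hpoly, hid⟩ := hq
  have hbot : q (fun _ => (⊥ : M)) = ⊥ := hid ⊥
  have htop : q (fun _ => (⊤ : M)) = ⊤ := hid ⊤
  constructor
  · intro x c _hc d hd
    have hmin : (fun i => φ i (x i ⊓ d i)) = fun i => φ i (x i) ⊓ c := by
      funext i
      rcases le_total (x i) (d i) with h | h
      · rw [inf_eq_left.2 h]
        exact (inf_eq_left.2 ((hφ i h).trans (hd i).le)).symm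
      · rw [inf_eq_right.2 h, hd i]
        exact (inf_eq_right.2 ((hd i).symm.le.trans (hφ i h))).symm
    rw [hfq, hfq, hmin, hpoly.inf_const, hbot, sup_bot_eq]
  · intro x c _hc d hd
    have hmax : (fun i => φ i (x i ⊔ d i)) = fun i => φ i (x i) ⊔ c := by
      funext i
      rcases le_total (x i) (d i) with h | h
      · rw [sup_eq_right.2 h, hd i]
        exact (sup_eq_right.2 ((hφ i h).trans (hd i).le)).symm
      · rw [sup_eq_left.2 h]
        exact (sup_eq_left.2 ((hd i).symm.le.trans (hφ i h))).symm
    rw [hfq, hfq, hmax, hpoly.sup_const, htop, inf_top_eq]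
end

section
/- If f : L_1 × ⋯ × L_n → L is order-preserving, satisfies condition (PI) w.r.t. local utility functions φ_1,…,φ_n with common range R, and is pseudo-horizontally minitive (resp. pseudo-horizontally maxitive) w.r.t. φ_1,…,φ_n, then f is pseudo-min homogeneous (resp. pseudo-max homogeneous) w.r.t. φ_1,…,φ_n. -/
open Function

/-- if `f` is order-preserving, satisfies (PI) and is pseudo-horizontally
minitive (resp. maxitive) w.r.t. local utility functions with common range `R`, then it is
pseudo-min (resp. pseudo-max) homogeneous w.r.t. them. -/
theorem pseudoHomog_of_pseudoHoriz
    {n : ℕ} {M : Type*} {L : Fin n → Type*}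
    [∀ i, LinearOrder (L i)] [∀ i, BoundedOrder (L i)]
    [LinearOrder M] [BoundedOrder M] (f : (∀ i, L i) → M) (φ : ∀ i, L i → M) (R : Set M)
    (hf : Monotone f) (hφ : ∀ i, Monotone (φ i)) (hR : ∀ i, Set.range (φ i) = R)
    (hPI : PseudoPI f φ R) :
    (PseudoHorizMin f φ R → PseudoMinHomog f φ R) ∧
    (PseudoHorizMax f φ R → PseudoMaxHomog f φ R) := by
  constructor
  · intro hmin x c hc d hd
    have hfd : f d = c := hPI c hc d hd
    have h1 := hmin (fun i => x i ⊓ d i) c hc d hd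
    have hsup : (fun i => (x i ⊓ d i) ⊔ d i) = d := by
      funext i; simp
    have hcut : cutAbove (fun i => x i ⊓ d i) d = cutAbove x d := by
      funext i
      simp only [cutAbove]
      rcases le_or_gt (d i) (x i) with h | h
      · rw [if_pos (le_inf h le_rfl), if_pos h]
      · rw [if_neg (fun hle => absurd (le_trans hle inf_le_left) h.not_ge),
          if_neg h.not_ge, inf_eq_left.mpr h.le]
    rw [hsup, hcut, hfd] at h1
    have hxle : x ≤ cutAbove x d := by
      intro i
      dsimp [cutAbove]; split
      · exact le_top
      · exact le_rfl
    refine le_antisymm ?_ ?_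
    · exact le_inf (hf fun i => inf_le_left) (h1 ▸ inf_le_left)
    · calc f x ⊓ c ≤ c ⊓ f (cutAbove x d) :=
            le_inf inf_le_right (inf_le_left.trans (hf hxle))
        _ = f (fun i => x i ⊓ d i) := h1.symm
  · intro hmax x c hc d hd
    have hfd : f d = c := hPI c hc d hd
    have h1 := hmax (fun i => x i ⊔ d i) c hc d hd
    have hsup : (fun i => (x i ⊔ d i) ⊓ d i) = d := by
      funext i; simp
    have hcut : cutBelow (fun i => x i ⊔ d i) d = cutBelow x d := by
      funext i
      simp only [cutBelow]
      rcases le_or_gt (x i) (d i) with h | h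
      · rw [if_pos (sup_le h le_rfl), if_pos h]
      · rw [if_neg (fun hle => absurd (le_trans le_sup_left hle) h.not_ge),
          if_neg h.not_ge, sup_eq_left.mpr h.le]
    rw [hsup, hcut, hfd] at h1
    have hxle : cutBelow x d ≤ x := by
      intro i
      dsimp [cutBelow]; split
      · exact bot_le
      · exact le_rfl
    refine le_antisymm ?_ ?_
    · calc f (fun i => x i ⊔ d i) = c ⊔ f (cutBelow x d) := h1
        _ ≤ f x ⊔ c := sup_le le_sup_right (le_sup_left.trans' (hf hxle))
    · exact sup_le (hf fun i => le_sup_left) (h1 ▸ le_sup_left)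
end

section
/- Suppose f : L_1 × ⋯ × L_n → L is order-preserving, is pseudo-min homogeneous (resp. pseudo-max homogeneous) w.r.t. local utility functions φ_1,…,φ_n with common range R, and satisfies condition (PI) w.r.t. φ_1,…,φ_n. Then f is pseudo-max homogeneous (resp. pseudo-min homogeneous) w.r.t. φ_1,…,φ_n if and only if f is pseudo-horizontally maxitive (resp. pseudo-horizontally minitive) w.r.t. φ_1,…,φ_n. -/
open Function

/-- suppose `f` is order-preserving and satisfies (PI) w.r.t. local utility
functions with common range `R`.  If `f` is pseudo-min (resp. pseudo-max) homogeneous,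
then `f` is pseudo-max (resp. pseudo-min) homogeneous iff it is pseudo-horizontally
maxitive (resp. minitive). -/
theorem pseudoHomog_iff_pseudoHoriz
    {n : ℕ} {M : Type*} {L : Fin n → Type*}
    [∀ i, LinearOrder (L i)] [∀ i, BoundedOrder (L i)]
    [LinearOrder M] [BoundedOrder M] (f : (∀ i, L i) → M) (φ : ∀ i, L i → M) (R : Set M)
    (hf : Monotone f) (hφ : ∀ i, Monotone (φ i)) (hR : ∀ i, Set.range (φ i) = R)
    (hPI : PseudoPI f φ R) :
    (PseudoMinHomog f φ R → (PseudoMaxHomog f φ R ↔ PseudoHorizMax f φ R)) ∧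
    (PseudoMaxHomog f φ R → (PseudoMinHomog f φ R ↔ PseudoHorizMin f φ R)) := by
  constructor
  · intro hmin
    constructor
    · intro hmax x c hc d hd
      have hminEq := hmin x c hc d hd
      have hcb_le : cutBelow x d ≤ x := by
        intro i; unfold cutBelow; split <;> simp
      have hx_le : x ≤ fun i => cutBelow x d i ⊔ d i := by
        intro i; unfold cutBelow; dsimp only
        split
        · next h => simpa using h
        · exact le_sup_left
      have key : f x ≤ f (cutBelow x d) ⊔ c := by
        calc f x ≤ f (fun i => cutBelow x d i ⊔ d i) := hf hx_le
          _ = f (cutBelow x d) ⊔ c := hmax (cutBelow x d) c hc d hd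
      apply le_antisymm
      · rw [hminEq]
        rcases le_total (f x) c with h | h
        · rw [inf_eq_left.mpr h]; exact le_sup_left
        · rw [inf_eq_right.mpr h]
          exact key.trans (by rw [sup_comm])
      · exact sup_le (hf fun i => inf_le_left) (hf hcb_le)
    · intro hhm x c hc d hd
      have h := hhm (fun i => x i ⊔ d i) c hc d hd
      have h1 : (fun i => (x i ⊔ d i) ⊓ d i) = d := by
        funext i; exact inf_eq_right.mpr le_sup_right
      have h2 : cutBelow (fun i => x i ⊔ d i) d = cutBelow x d := by
        funext i; unfold cutBelow
        by_cases hle : x i ≤ d i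
        · simp [hle]
        · have hdx : d i ≤ x i := le_of_not_ge hle
          simp [hle, sup_eq_left.mpr hdx]
      rw [h1, h2, hPI c hc d hd] at h
      have hcb_le : cutBelow x d ≤ x := by
        intro i; unfold cutBelow; split <;> simp
      apply le_antisymm
      · rw [h]
        exact sup_le le_sup_right ((hf hcb_le).trans le_sup_left)
      · exact sup_le (hf fun i => le_sup_left)
          ((hPI c hc d hd) ▸ hf (fun i => le_sup_right))
  · intro hmax
    constructor
    · intro hmin x c hc d hd
      have hmaxEq := hmax x c hc d hd
      have hca_ge : x ≤ cutAbove x d := by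
        intro i; unfold cutAbove; split <;> simp
      have hx_ge : (fun i => cutAbove x d i ⊓ d i) ≤ x := by
        intro i; unfold cutAbove; dsimp only
        split
        · next h => simpa using h
        · exact inf_le_left
      have key : f (cutAbove x d) ⊓ c ≤ f x := by
        calc f (cutAbove x d) ⊓ c = f (fun i => cutAbove x d i ⊓ d i) :=
            (hmin (cutAbove x d) c hc d hd).symm
          _ ≤ f x := hf hx_ge
      apply le_antisymm
      · exact le_inf (hf fun i => le_sup_left) (hf hca_ge)
      · rw [hmaxEq]
        rcases le_total c (f x) with h | h
        · rw [sup_eq_left.mpr h]; exact inf_le_left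
        · rw [sup_eq_right.mpr h, inf_comm]
          exact key
    · intro hhm x c hc d hd
      have h := hhm (fun i => x i ⊓ d i) c hc d hd
      have h1 : (fun i => (x i ⊓ d i) ⊔ d i) = d := by
        funext i; exact sup_eq_right.mpr inf_le_right
      have h2 : cutAbove (fun i => x i ⊓ d i) d = cutAbove x d := by
        funext i; unfold cutAbove
        by_cases hle : d i ≤ x i
        · simp [hle]
        · have hdx : x i ≤ d i := le_of_not_ge hle
          simp [hle, inf_eq_left.mpr hdx]
      rw [h1, h2, hPI c hc d hd] at h
      apply le_antisymm
      · exact le_inf (hf fun i => inf_le_left)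
          ((hPI c hc d hd) ▸ hf (fun i => inf_le_right))
      · rw [h, inf_comm (f x) c]
        exact inf_le_inf le_rfl (hf (by intro i; unfold cutAbove; split <;> simp))
end

section
/- If f : L_1 × ⋯ × L_n → L is order-preserving, pseudo-min homogeneous and pseudo-horizontally maxitive w.r.t. local utility functions φ_1,…,φ_n with common range R, then f is pseudo-median decomposable w.r.t. the local utility functions φ_1,…,φ_n, i.e., f(x) = med(f(x_k^0), φ_k(x_k), f(x_k^1)) for every x and every k ∈ {1,…,n}. -/
open Function

/-- if `f` is order-preserving, pseudo-min homogeneous and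
pseudo-horizontally maxitive w.r.t. local utility functions `φ i` with common range `R`,
then `f` is pseudo-median decomposable w.r.t. `φ`. -/
theorem pseudoMedianDecomp_of_minHomog_horizMax
    {n : ℕ} {M : Type*} {L : Fin n → Type*}
    [∀ i, LinearOrder (L i)] [∀ i, BoundedOrder (L i)]
    [LinearOrder M] [BoundedOrder M] (f : (∀ i, L i) → M) (φ : ∀ i, L i → M) (R : Set M)
    (hf : Monotone f) (hφ : ∀ i, Monotone (φ i)) (hR : ∀ i, Set.range (φ i) = R)
    (hmin : PseudoMinHomog f φ R) (hhmax : PseudoHorizMax f φ R) :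
    PseudoMedianDecomp f φ := by
  intro x k
  classical
  set c := φ k (x k) with hc
  have hcR : c ∈ R := by rw [← hR k]; exact ⟨x k, rfl⟩
  have hd0 : ∀ i, ∃ y : L i, φ i y = c := by
    intro i
    have : c ∈ Set.range (φ i) := by rw [hR i]; exact hcR
    exact this
  choose d0 hd0' using hd0
  set d := Function.update d0 k (x k) with hdef
  have hdk : d k = x k := by simp [hdef]
  have hfib : FiberAll φ c d := by
    intro i
    by_cases h : i = k
    · subst h; rw [hdk]
    · rw [hdef, Function.update_of_ne h]; exact hd0' i
  have h1 : (fun i => (update x k (⊤ : L k) : ∀ i, L i) i ⊓ d i) = fun i => x i ⊓ d i := by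
    funext i
    by_cases h : i = k
    · subst h; simp [hdk]
    · rw [Function.update_of_ne h]
  have hmin' := hmin (update x k ⊤) c hcR d hfib
  rw [h1] at hmin'
  have hhm := hhmax x c hcR d hfib
  have hcb : cutBelow x d ≤ update x k ⊥ := by
    intro i
    by_cases h : i = k
    · subst h; simp [cutBelow, hdk]
    · simp only [cutBelow, Function.update_of_ne h]
      split <;> simp
  have hle1 : f (fun i => x i ⊓ d i) ≤ f x := hf fun i => inf_le_left
  have hle2 : f (update x k ⊥) ≤ f x := by
    apply hf
    intro i
    by_cases h : i = k
    · subst h; simp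
    · rw [Function.update_of_ne h]
  have hle3 : f (update x k ⊥) ≤ f (update x k ⊤) := by
    apply hf
    intro i
    by_cases h : i = k
    · subst h; simp
    · rw [Function.update_of_ne h, Function.update_of_ne h]
  have hmed : med (f (update x k ⊥)) c (f (update x k ⊤)) =
      f (update x k ⊥) ⊔ (c ⊓ f (update x k ⊤)) := by
    unfold med
    rw [inf_eq_left.2 hle3,
      show f (update x k ⊥) ⊓ c ⊔ f (update x k ⊥) = f (update x k ⊥) from
        sup_eq_right.2 inf_le_left]
  rw [hmed]
  apply le_antisymm
  · rw [hhm]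
    apply sup_le
    · rw [hmin']
      exact le_sup_of_le_right (by rw [inf_comm])
    · exact le_sup_of_le_left (hf hcb)
  · apply sup_le hle2
    rw [inf_comm, ← hmin']
    exact hle1
end

section
/- Every Sugeno utility function f(x) = q(φ_1(x_1),…,φ_n(x_n)), where q is a Sugeno integral and φ_1,…,φ_n are local utility functions with common range R, is pseudo-comonotonic minitive and pseudo-comonotonic maxitive w.r.t. φ_1,…,φ_n. Moreover, if a function f is pseudo-comonotonic minitive (resp. pseudo-comonotonic maxitive) w.r.t. φ_1,…,φ_n and satisfies condition (PI) w.r.t. φ_1,…,φ_n, then f is pseudo-min homogeneous (resp. pseudo-max homogeneous) w.r.t. φ_1,…,φ_n. -/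
open Function

section NCAux
variable {M : Type*} [LinearOrder M]

/-- Non-crossing condition for two pairs in a chain. -/
def NCpair (a a' b b' : M) : Prop := a ⊓ b' ≤ a' ⊔ b ∧ a' ⊓ b ≤ a ⊔ b'

lemma ncpair_symm {a a' b b' : M} (h : NCpair a a' b b') : NCpair b b' a a' :=
  ⟨by rw [inf_comm, sup_comm]; exact h.2, by rw [inf_comm, sup_comm]; exact h.1⟩

lemma ncpair_of_le_le {a a' b b' : M} (h1 : a ≤ b) (h2 : a' ≤ b') : NCpair a a' b b' :=
  ⟨inf_le_left.trans (h1.trans le_sup_right), inf_le_left.trans (h2.trans le_sup_right)⟩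

lemma ncpair_const {b b' : M} (c : M) : NCpair c c b b' :=
  ⟨inf_le_left.trans le_sup_left, inf_le_left.trans le_sup_left⟩

lemma ncpair_sup_left {a a' b b' c c' : M} (h1 : NCpair a a' c c') (h2 : NCpair b b' c c') :
    NCpair (a ⊔ b) (a' ⊔ b') c c' := by
  constructor
  · rcases le_total a b with h | h
    · rw [sup_eq_right.2 h]
      exact h2.1.trans (sup_le_sup_right le_sup_right _)
    · rw [sup_eq_left.2 h]
      exact h1.1.trans (sup_le_sup_right le_sup_left _)
  · rcases le_total a' b' with h | h
    · rw [sup_eq_right.2 h]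
      exact h2.2.trans (sup_le_sup_right le_sup_right _)
    · rw [sup_eq_left.2 h]
      exact h1.2.trans (sup_le_sup_right le_sup_left _)

lemma ncpair_inf_left {a a' b b' c c' : M} (h1 : NCpair a a' c c') (h2 : NCpair b b' c c') :
    NCpair (a ⊓ b) (a' ⊓ b') c c' := by
  constructor
  · rcases le_total a' b' with h | h
    · rw [inf_eq_left.2 h]
      exact ((inf_le_inf_right c' inf_le_left)).trans h1.1
    · rw [inf_eq_right.2 h]
      exact ((inf_le_inf_right c' inf_le_right)).trans h2.1
  · rcases le_total a b with h | h
    · rw [inf_eq_left.2 h]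
      exact ((inf_le_inf_right c inf_le_left)).trans h1.2
    · rw [inf_eq_right.2 h]
      exact ((inf_le_inf_right c inf_le_right)).trans h2.2

lemma chain_sup_inf {a a' b b' : M} (h : NCpair a a' b b') :
    (a ⊓ a') ⊔ (b ⊓ b') = (a ⊔ b) ⊓ (a' ⊔ b') := by
  apply le_antisymm
  · exact sup_le (inf_le_inf le_sup_left le_sup_left) (inf_le_inf le_sup_right le_sup_right)
  · rw [inf_sup_right, inf_sup_left, inf_sup_left]
    have hab' : a ⊓ b' ≤ a ⊓ a' ⊔ b ⊓ b' := by
      rcases le_total b a' with hba | hba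
      · have : a ⊓ b' ≤ a' := h.1.trans (sup_le le_rfl hba)
        exact le_sup_of_le_left (le_inf inf_le_left this)
      · have : a ⊓ b' ≤ b := h.1.trans (sup_le hba le_rfl)
        exact le_sup_of_le_right (le_inf this inf_le_right)
    have ha'b : b ⊓ a' ≤ a ⊓ a' ⊔ b ⊓ b' := by
      rw [inf_comm]
      rcases le_total b' a with hba | hba
      · have : a' ⊓ b ≤ a := h.2.trans (sup_le le_rfl hba)
        exact le_sup_of_le_left (le_inf this inf_le_left)
      · have : a' ⊓ b ≤ b' := h.2.trans (sup_le hba le_rfl)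
        exact le_sup_of_le_right (le_inf inf_le_right this)
    exact sup_le (sup_le le_sup_left hab') (sup_le ha'b le_sup_right)

lemma chain_inf_sup {a a' b b' : M} (h : NCpair a a' b b') :
    (a ⊔ a') ⊓ (b ⊔ b') = (a ⊓ b) ⊔ (a' ⊓ b') := by
  apply le_antisymm
  · rw [inf_sup_right, inf_sup_left, inf_sup_left]
    have hab' : a ⊓ b' ≤ a ⊓ b ⊔ a' ⊓ b' := by
      rcases le_total b a' with hba | hba
      · have : a ⊓ b' ≤ a' := h.1.trans (sup_le le_rfl hba)
        exact le_sup_of_le_right (le_inf this inf_le_right)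
      · have : a ⊓ b' ≤ b := h.1.trans (sup_le hba le_rfl)
        exact le_sup_of_le_left (le_inf inf_le_left this)
    have ha'b : a' ⊓ b ≤ a ⊓ b ⊔ a' ⊓ b' := by
      rcases le_total b' a with hba | hba
      · have : a' ⊓ b ≤ a := h.2.trans (sup_le le_rfl hba)
        exact le_sup_of_le_left (le_inf this inf_le_right)
      · have : a' ⊓ b ≤ b' := h.2.trans (sup_le hba le_rfl)
        exact le_sup_of_le_right (le_inf inf_le_left this)
    exact sup_le (sup_le le_sup_left hab') (sup_le ha'b le_sup_right)
  · exact sup_le (inf_le_inf le_sup_left le_sup_left) (inf_le_inf le_sup_right le_sup_right)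

end NCAux

section PolyAux
variable {M : Type*} [LinearOrder M] {n : ℕ}

lemma comon_pairwise {y y' : Fin n → M} (h : Comonotone y y') :
    ∀ i j, (y i ≤ y j ∧ y' i ≤ y' j) ∨ (y j ≤ y i ∧ y' j ≤ y' i) := by
  obtain ⟨σ, hm, hm'⟩ := h
  intro i j
  rcases le_total (σ.symm i) (σ.symm j) with h | h
  · left
    exact ⟨by simpa [Function.comp] using hm h, by simpa [Function.comp] using hm' h⟩
  · right
    exact ⟨by simpa [Function.comp] using hm h, by simpa [Function.comp] using hm' h⟩

lemma nc_all {y y' : Fin n → M}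
    (hc : ∀ i j, (y i ≤ y j ∧ y' i ≤ y' j) ∨ (y j ≤ y i ∧ y' j ≤ y' i))
    {p : (Fin n → M) → M} (hp : IsLatticePolynomial p) :
    ∀ q : (Fin n → M) → M, IsLatticePolynomial q → NCpair (p y) (p y') (q y) (q y') := by
  induction hp with
  | proj i =>
    intro q hq
    induction hq with
    | proj j =>
      rcases hc i j with ⟨h1, h2⟩ | ⟨h1, h2⟩
      · exact ncpair_of_le_le h1 h2
      · exact ncpair_symm (ncpair_of_le_le h1 h2)
    | const c => exact ncpair_symm (ncpair_const c)
    | inf hq1 hq2 ih1 ih2 =>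
      exact ncpair_symm (ncpair_inf_left (ncpair_symm ih1) (ncpair_symm ih2))
    | sup hq1 hq2 ih1 ih2 =>
      exact ncpair_symm (ncpair_sup_left (ncpair_symm ih1) (ncpair_symm ih2))
  | const c => intro q hq; exact ncpair_const c
  | inf h1 h2 ih1 ih2 => intro q hq; exact ncpair_inf_left (ih1 q hq) (ih2 q hq)
  | sup h1 h2 ih1 ih2 => intro q hq; exact ncpair_sup_left (ih1 q hq) (ih2 q hq)

lemma poly_comon {y y' : Fin n → M}
    (hc : ∀ i j, (y i ≤ y j ∧ y' i ≤ y' j) ∨ (y j ≤ y i ∧ y' j ≤ y' i))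
    {p : (Fin n → M) → M} (hp : IsLatticePolynomial p) :
    p (fun i => y i ⊓ y' i) = p y ⊓ p y' ∧ p (fun i => y i ⊔ y' i) = p y ⊔ p y' := by
  induction hp with
  | proj i => exact ⟨rfl, rfl⟩
  | const c => exact ⟨(inf_idem c).symm, (sup_idem c).symm⟩
  | inf h1 h2 ih1 ih2 =>
    constructor
    · dsimp only
      rw [ih1.1, ih2.1, inf_inf_inf_comm]
    · dsimp only
      rw [ih1.2, ih2.2]
      exact chain_inf_sup (nc_all hc h1 _ h2)
  | sup h1 h2 ih1 ih2 =>
    constructor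
    · dsimp only
      rw [ih1.1, ih2.1]
      exact chain_sup_inf (nc_all hc h1 _ h2)
    · dsimp only
      rw [ih1.2, ih2.2, sup_sup_sup_comm]

end PolyAux

/-- every Sugeno utility function is pseudo-comonotonic minitive and
maxitive w.r.t. its local utility functions; moreover a pseudo-comonotonic minitive
(resp. maxitive) function satisfying (PI) is pseudo-min (resp. pseudo-max) homogeneous. -/
theorem pseudoComon_facts
    {n : ℕ} {M : Type*} {L : Fin n → Type*}
    [∀ i, LinearOrder (L i)] [∀ i, BoundedOrder (L i)]
    [LinearOrder M] [BoundedOrder M] :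
    (∀ (f : (∀ i, L i) → M) (q : (Fin n → M) → M) (φ : ∀ i, L i → M) (R : Set M),
      IsSugenoIntegral q → (∀ i, Monotone (φ i)) → (∀ i, Set.range (φ i) = R) →
      (∀ x, f x = q fun i => φ i (x i)) →
      PseudoComonMin f φ ∧ PseudoComonMax f φ) ∧
    (∀ (f : (∀ i, L i) → M) (φ : ∀ i, L i → M) (R : Set M),
      (∀ i, Monotone (φ i)) → (∀ i, Set.range (φ i) = R) → PseudoPI f φ R →
      (PseudoComonMin f φ → PseudoMinHomog f φ R) ∧
      (PseudoComonMax f φ → PseudoMaxHomog f φ R)) := by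
  constructor
  · intro f q φ R hq hφ hR hf
    constructor
    · intro x x' hcom
      have hc := comon_pairwise hcom
      have e : f (fun i => x i ⊓ x' i) = q (fun i => φ i (x i) ⊓ φ i (x' i)) := by
        rw [hf]
        congr 1
        funext i
        exact (hφ i).map_inf _ _
      rw [e, hf x, hf x']
      exact (poly_comon hc hq.1).1
    · intro x x' hcom
      have hc := comon_pairwise hcom
      have e : f (fun i => x i ⊔ x' i) = q (fun i => φ i (x i) ⊔ φ i (x' i)) := by
        rw [hf]
        congr 1
        funext i
        exact (hφ i).map_sup _ _
      rw [e, hf x, hf x']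
      exact (poly_comon hc hq.1).2
  · intro f φ R hφ hR hPI
    constructor
    · intro hmin x c hc d hd
      have hcom : Comonotone (fun i => φ i (x i)) (fun i => φ i (d i)) := by
        refine ⟨Tuple.sort (fun i => φ i (x i)), Tuple.monotone_sort _, ?_⟩
        have hdc : (fun i => φ i (d i)) = fun _ => c := funext hd
        rw [hdc]
        exact monotone_const
      rw [hmin x d hcom, hPI c hc d hd]
    · intro hmax x c hc d hd
      have hcom : Comonotone (fun i => φ i (x i)) (fun i => φ i (d i)) := by
        refine ⟨Tuple.sort (fun i => φ i (x i)), Tuple.monotone_sort _, ?_⟩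
        have hdc : (fun i => φ i (d i)) = fun _ => c := funext hd
        rw [hdc]
        exact monotone_const
      rw [hmax x d hcom, hPI c hc d hd]
end

section
/- If a function f : L_1 × ⋯ × L_n → L is pseudo-comonotonic minitive or pseudo-comonotonic maxitive w.r.t. local utility functions φ_1,…,φ_n with common range R, then f is order-preserving. -/
open Function

/-!
For `x ≤ x'` with `φ̄ x`, `φ̄ x'` comonotonic, minitivity gives `f x = f x ⊓ f x' ≤ f x'`
(dually for maxitivity). Raising a single coordinate `k` from `a` to `b` keeps the images
comonotonic as long as no other value `φ_j (x_j)` lies strictly between `φ_k a` and `φ_k b`.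
Because all `φ_i` have the same range, each such value is `φ_k c` for some `a ≤ c ≤ b`, so
refining `a ≤ b` at these finitely many points makes `f` monotone in each coordinate, hence
monotone.
-/

theorem comonotone_of_forall_lt_imp_le {M : Type*} [LinearOrder M] {n : ℕ} {y y' : Fin n → M}
    (h : ∀ i j, y i < y j → y' i ≤ y' j) : Comonotone y y' := by
  -- sorting the pairs `(y i, y' i)` lexicographically sorts both tuples
  let g : Fin n → M ×ₗ M := fun i => toLex (y i, y' i)
  refine ⟨Tuple.sort g, fun p q hpq => ?_, fun p q hpq => ?_⟩ <;>
    rcases Prod.Lex.le_iff.1 (Tuple.monotone_sort g hpq) with hlt | ⟨heq, hle⟩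
  · exact hlt.le
  · exact heq.le
  · exact h _ _ hlt
  · exact hle

theorem comonotone_update_of_forall_notMem_Ioo {M : Type*} [LinearOrder M] {n : ℕ}
    (y : Fin n → M) (k : Fin n) {u v : M} (huv : u ≤ v) (hy : ∀ j, y j ∉ Set.Ioo u v) :
    Comonotone (update y k u) (update y k v) := by
  refine comonotone_of_forall_lt_imp_le fun i j hij => ?_
  rcases eq_or_ne i k with rfl | hi <;> rcases eq_or_ne j i with rfl | hj
  · exact le_rfl
  · simp only [update_self, update_of_ne hj] at hij ⊢
    exact not_lt.1 fun hlt => hy j ⟨hij, hlt⟩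
  · exact le_rfl
  · rcases eq_or_ne j k with rfl | hjk
    · simp only [update_self, update_of_ne hi] at hij ⊢
      exact hij.le.trans huv
    · simp only [update_of_ne hi, update_of_ne hjk] at hij ⊢
      exact hij.le

theorem monotone_of_monotone_update {ι β : Type*} {π : ι → Type*} [Finite ι] [DecidableEq ι]
    [∀ i, Preorder (π i)] [Preorder β] {f : (∀ i, π i) → β}
    (hf : ∀ x i, Monotone fun a => f (update x i a)) : Monotone f := by
  intro x y hxy
  cases nonempty_fintype ι
  have key : ∀ s : Finset ι, f x ≤ f (s.piecewise y x) := by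
    intro s
    induction s using Finset.induction_on with
    | empty => rw [Finset.piecewise_empty]
    | insert k s hk ih =>
      calc f x ≤ f (s.piecewise y x) := ih
        _ = f (update (s.piecewise y x) k (x k)) := by
          rw [← s.piecewise_eq_of_notMem y x hk, update_eq_self]
        _ ≤ f (update (s.piecewise y x) k (y k)) := hf _ k (hxy k)
        _ = f ((insert k s).piecewise y x) := by rw [Finset.piecewise_insert]
  simpa only [Finset.piecewise_univ] using key Finset.univ

section PseudoComonotonic

variable {n : ℕ} {M : Type*} {L : Fin n → Type*}
  [∀ i, LinearOrder (L i)] [LinearOrder M] {f : (∀ i, L i) → M} {φ : ∀ i, L i → M}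

theorem PseudoComonMin.le_of_le (hf : PseudoComonMin f φ) {x x' : ∀ i, L i} (hx : x ≤ x')
    (hc : Comonotone (fun i => φ i (x i)) (fun i => φ i (x' i))) : f x ≤ f x' := by
  have := hf x x' hc
  rw [show (fun i => x i ⊓ x' i) = x from funext fun i => inf_eq_left.2 (hx i)] at this
  exact this.trans_le inf_le_right

theorem PseudoComonMax.le_of_le (hf : PseudoComonMax f φ) {x x' : ∀ i, L i} (hx : x ≤ x')
    (hc : Comonotone (fun i => φ i (x i)) (fun i => φ i (x' i))) : f x ≤ f x' := by
  have := hf x x' hc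
  rw [show (fun i => x i ⊔ x' i) = x' from funext fun i => sup_eq_right.2 (hx i)] at this
  exact le_sup_left.trans this.ge

theorem monotone_update_of_le_of_comonotone (hφ : ∀ i, Monotone (φ i)) {R : Set M}
    (hR : ∀ i, Set.range (φ i) = R)
    (hstep : ∀ x x' : ∀ i, L i, x ≤ x' →
      Comonotone (fun i => φ i (x i)) (fun i => φ i (x' i)) → f x ≤ f x')
    (x : ∀ i, L i) (k : Fin n) : Monotone fun a => f (update x k a) := by
  suffices key : ∀ s : Finset (Fin n), ∀ a b, a ≤ b →
      (∀ j, φ j (x j) ∈ Set.Ioo (φ k a) (φ k b) → j ∈ s) → f (update x k a) ≤ f (update x k b) from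
    fun a b hab => key Finset.univ a b hab fun j _ => Finset.mem_univ j
  intro s
  induction s using Finset.strongInduction with
  | H s ih =>
    intro a b hab hs
    by_cases hgap : ∀ j, φ j (x j) ∉ Set.Ioo (φ k a) (φ k b)
    · refine hstep _ _ (update_mono hab) ?_
      simp only [apply_update]
      exact comonotone_update_of_forall_notMem_Ioo _ k (hφ k hab) hgap
    obtain ⟨j, hj⟩ := not_forall_not.1 hgap
    have hjs : j ∈ s := hs j hj
    obtain ⟨c, hc⟩ : φ j (x j) ∈ Set.range (φ k) := hR k ▸ hR j ▸ ⟨x j, rfl⟩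
    have hne : ∀ i, φ i (x i) ≠ φ k c → i ≠ j := fun i hi =>
      ne_of_apply_ne (fun i => φ i (x i)) (hc ▸ hi)
    rw [← hc] at hj
    calc f (update x k a) ≤ f (update x k c) :=
          ih (s.erase j) (Finset.erase_ssubset hjs) a c ((hφ k).reflect_lt hj.1).le
            fun i hi => Finset.mem_erase.2 ⟨hne i hi.2.ne, hs i ⟨hi.1, hi.2.trans hj.2⟩⟩
      _ ≤ f (update x k b) :=
          ih (s.erase j) (Finset.erase_ssubset hjs) c b ((hφ k).reflect_lt hj.2).le
            fun i hi => Finset.mem_erase.2 ⟨hne i hi.1.ne', hs i ⟨hj.1.trans hi.1, hi.2⟩⟩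

end PseudoComonotonic

theorem monotone_of_pseudoComon_general
    {n : ℕ} {M : Type*} {L : Fin n → Type*}
    [∀ i, LinearOrder (L i)]
    [LinearOrder M] (f : (∀ i, L i) → M) (φ : ∀ i, L i → M) (R : Set M)
    (hφ : ∀ i, Monotone (φ i)) (hR : ∀ i, Set.range (φ i) = R)
    (h : PseudoComonMin f φ ∨ PseudoComonMax f φ) :
    Monotone f := by
  have hstep : ∀ x x' : ∀ i, L i, x ≤ x' →
      Comonotone (fun i => φ i (x i)) (fun i => φ i (x' i)) → f x ≤ f x' :=
    h.elim (fun hf _ _ => hf.le_of_le) (fun hf _ _ => hf.le_of_le)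
  exact monotone_of_monotone_update (monotone_update_of_le_of_comonotone hφ hR hstep)

/-- a function that is pseudo-comonotonic minitive or pseudo-comonotonic
maxitive w.r.t. local utility functions with common range `R` is order-preserving. -/
theorem monotone_of_pseudoComon
    {n : ℕ} {M : Type*} {L : Fin n → Type*}
    [∀ i, LinearOrder (L i)] [∀ i, BoundedOrder (L i)]
    [LinearOrder M] [BoundedOrder M] (f : (∀ i, L i) → M) (φ : ∀ i, L i → M) (R : Set M)
    (hφ : ∀ i, Monotone (φ i)) (hR : ∀ i, Set.range (φ i) = R)
    (h : PseudoComonMin f φ ∨ PseudoComonMax f φ) :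
    Monotone f :=
  monotone_of_pseudoComon_general f φ R hφ hR h
end
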